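/- arXiv:2204.04729 — 5 statements merged into one kernel-verified Lean document; each statement's English description precedes it below -/
import Mathlib

section
/- If P is an indecomposable (prime) finite poset and Q is a poset on the same ground set with the same comparability graph as P, then Q = P or Q = P^d. -/
/-!
Gallai's argument. Orient each comparable pair as a dart of the comparability graph and let
`(a, b) Γ (a, b')` whenever `b, b'` are incomparable (and dually at the head). Any transitive
orientation orients Γ-related darts alike, so whether `P` and `Q` agree on an edge depends only on
its colour class (its Γ-class up to reversal). The vertices reachable from an edge through edges of
its colour form a module; in a prime poset it is everything, so every vertex meets every colour.
Golumbic's Triangle Lemma then shows that a triangle never has its base coloured differently from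
both sides, hence two edges at a common vertex always share a colour and there is a single colour
class: `Q` agrees with `P` everywhere or nowhere.
-/

def IsModule {α : Type*} (lt : α → α → Prop) (M : Set α) : Prop :=
  ∀ z ∉ M, (∀ m ∈ M, lt z m ∨ lt m z) ∨ (∀ m ∈ M, ¬ lt z m ∧ ¬ lt m z)

/-- A poset (given by its strict order) is indecomposable (prime) if its only
nonempty modules are the whole ground set and the singletons. -/
def IsIndecomposable {α : Type*} (lt : α → α → Prop) : Prop :=
  ∀ M : Set α, M.Nonempty → IsModule lt M → M = Set.univ ∨ ∃ x, M = {x}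

namespace SimpleGraph

variable {α : Type*} (G : SimpleGraph α)

/-- Gallai's relation `Γ` on darts: `(a, b) Γ (a', b')` when the darts share their tail and their
heads are non-adjacent, or share their head and their tails are non-adjacent. -/
def Forces (d e : G.Dart) : Prop :=
  d.fst = e.fst ∧ ¬ G.Adj d.snd e.snd ∨ d.snd = e.snd ∧ ¬ G.Adj d.fst e.fst

def Implied : G.Dart → G.Dart → Prop := Relation.ReflTransGen G.Forces

def SameColor (d e : G.Dart) : Prop := G.Implied d e ∨ G.Implied d e.symm

variable {G} {d e f : G.Dart}

lemma Forces.symm (h : G.Forces d e) : G.Forces e d := by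
  rcases h with ⟨hfst, hsnd⟩ | ⟨hsnd, hfst⟩
  · exact .inl ⟨hfst.symm, fun h => hsnd h.symm⟩
  · exact .inr ⟨hsnd.symm, fun h => hfst h.symm⟩

lemma Forces.dart_symm (h : G.Forces d e) : G.Forces d.symm e.symm := Or.symm h

lemma Forces.implied (h : G.Forces d e) : G.Implied d e := .single h

instance : Std.Symm G.Forces := ⟨fun _ _ => Forces.symm⟩

lemma Implied.symm (h : G.Implied d e) : G.Implied e d :=
  Std.Symm.symm (r := Relation.ReflTransGen G.Forces) _ _ h

lemma Implied.trans (h : G.Implied d e) (h' : G.Implied e f) : G.Implied d f :=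
  Relation.ReflTransGen.trans h h'

lemma Implied.dart_symm (h : G.Implied d e) : G.Implied d.symm e.symm :=
  Relation.ReflTransGen.lift Dart.symm (fun _ _ => Forces.dart_symm) _ _ h

lemma Implied.sameColor (h : G.Implied d e) : G.SameColor d e := .inl h

lemma SameColor.refl (d : G.Dart) : G.SameColor d d := .inl .refl

lemma sameColor_symm_right : G.SameColor d e.symm ↔ G.SameColor d e := by
  rw [SameColor, SameColor, Dart.symm_symm, or_comm]

lemma SameColor.symm (h : G.SameColor d e) : G.SameColor e d := by
  rcases h with h | h
  · exact .inl h.symm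
  · exact .inr h.symm.dart_symm

lemma sameColor_symm_left : G.SameColor d.symm e ↔ G.SameColor d e :=
  ⟨fun h => sameColor_symm_right.1 h.symm |>.symm,
    fun h => (sameColor_symm_right.2 h.symm).symm⟩

lemma SameColor.trans (h : G.SameColor d e) (h' : G.SameColor e f) : G.SameColor d f := by
  rcases h with h | h
  · rcases h' with h' | h'
    · exact .inl (h.trans h')
    · exact .inr (h.trans h')
  · rcases h' with h' | h'
    · exact .inr (h.trans h'.dart_symm)
    · simpa using (h.trans h'.dart_symm).sameColor

variable (G) in
def IsApex (a : α) (β γ q : G.Dart) : Prop :=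
  (∃ h : G.Adj a q.fst, G.Implied β ⟨(a, q.fst), h⟩) ∧
    ∃ h : G.Adj a q.snd, G.Implied γ ⟨(a, q.snd), h⟩

lemma isApex_symm {a : α} {β γ q : G.Dart} : G.IsApex a γ β q.symm ↔ G.IsApex a β γ q :=
  and_comm

lemma IsApex.of_forces_of_fst_eq {a : α} {β γ u v : G.Dart} (hu : G.IsApex a β γ u)
    (hfst : u.fst = v.fst) (hsnd : ¬ G.Adj u.snd v.snd) (hβ : ¬ G.SameColor v β) :
    G.IsApex a β γ v := by
  obtain ⟨hav₁, hβv⟩ : ∃ h : G.Adj a v.fst, G.Implied β ⟨(a, v.fst), h⟩ := hfst ▸ hu.1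
  obtain ⟨hau₂, hγu⟩ := hu.2
  have hav₂ : G.Adj a v.snd := by
    by_contra hav₂
    have hforces : G.Forces v ⟨(v.fst, a), hav₁.symm⟩ := .inl ⟨rfl, fun h => hav₂ h.symm⟩
    exact hβ (.inr (hforces.implied.trans hβv.symm.dart_symm))
  have hforces : G.Forces ⟨(a, u.snd), hau₂⟩ ⟨(a, v.snd), hav₂⟩ := .inl ⟨rfl, hsnd⟩
  exact ⟨⟨hav₁, hβv⟩, ⟨hav₂, hγu.trans hforces.implied⟩⟩

lemma IsApex.of_forces {a : α} {β γ u v : G.Dart} (hu : G.IsApex a β γ u) (huv : G.Forces u v)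
    (hβ : ¬ G.SameColor v β) (hγ : ¬ G.SameColor v γ) : G.IsApex a β γ v := by
  rcases huv with ⟨hfst, hsnd⟩ | ⟨hsnd, hfst⟩
  · exact hu.of_forces_of_fst_eq hfst hsnd hβ
  · rw [← sameColor_symm_left] at hγ
    exact isApex_symm.1 ((isApex_symm.2 hu).of_forces_of_fst_eq hsnd hfst hγ)

/-- Golumbic's Triangle Lemma. -/
theorem Implied.isApex {a b c : α} {hab : G.Adj a b} {hac : G.Adj a c} {hbc : G.Adj b c}
    (hβ : ¬ G.SameColor ⟨(b, c), hbc⟩ ⟨(a, b), hab⟩)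
    (hγ : ¬ G.SameColor ⟨(b, c), hbc⟩ ⟨(a, c), hac⟩)
    {q : G.Dart} (hq : G.Implied ⟨(b, c), hbc⟩ q) : G.IsApex a ⟨(a, b), hab⟩ ⟨(a, c), hac⟩ q := by
  induction hq with
  | refl => exact ⟨⟨hab, .refl⟩, ⟨hac, .refl⟩⟩
  | tail hq huv ih =>
    have hv : G.SameColor ⟨(b, c), hbc⟩ _ := (Implied.trans hq huv.implied).sameColor
    exact ih.of_forces huv (fun h => hβ (hv.trans h)) (fun h => hγ (hv.trans h))

section EveryVertexMeetsEveryColor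

variable (hmeets : ∀ (d : G.Dart) (x : α), ∃ e : G.Dart, e.fst = x ∧ G.SameColor d e)
include hmeets

lemma sameColor_or_sameColor_of_triangle {a b c : α} (hab : G.Adj a b) (hac : G.Adj a c)
    (hbc : G.Adj b c) :
    G.SameColor ⟨(b, c), hbc⟩ ⟨(a, b), hab⟩ ∨ G.SameColor ⟨(b, c), hbc⟩ ⟨(a, c), hac⟩ := by
  by_contra! ⟨hβ, hγ⟩
  obtain ⟨e, rfl, he⟩ := hmeets ⟨(b, c), hbc⟩ a
  rcases he with he | he
  · exact G.irrefl (he.isApex hβ hγ).1.1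
  · exact G.irrefl (he.isApex hβ hγ).2.1

lemma sameColor_of_fst_eq (h : d.fst = e.fst) : G.SameColor d e := by
  obtain ⟨⟨s, w⟩, hsw⟩ := d
  obtain ⟨⟨s', t⟩, hst⟩ := e
  obtain rfl : s = s' := h
  by_cases hwt : w = t
  · subst hwt; exact .refl _
  by_cases hadj : G.Adj w t
  · have h₁ := sameColor_or_sameColor_of_triangle hmeets hsw.symm hadj hst
    have h₂ := sameColor_or_sameColor_of_triangle hmeets hst.symm hadj.symm hsw
    rcases h₁ with h₁ | h₁
    · exact (sameColor_symm_right.1 h₁).symm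
    rcases h₂ with h₂ | h₂
    · exact sameColor_symm_right.1 h₂
    exact (sameColor_symm_right.1 h₂).trans h₁.symm
  · have hforces : G.Forces ⟨(s, w), hsw⟩ ⟨(s, t), hst⟩ := .inl ⟨rfl, hadj⟩
    exact hforces.implied.sameColor

theorem sameColor_of_forall_exists_dart (d e : G.Dart) : G.SameColor d e := by
  obtain ⟨f, hf, hdf⟩ := hmeets d e.fst
  exact hdf.trans (sameColor_of_fst_eq hmeets hf)

end EveryVertexMeetsEveryColor

variable (G) in
def ColorAdj (d : G.Dart) (u v : α) : Prop := ∃ h : G.Adj u v, G.SameColor d ⟨(u, v), h⟩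

variable (G) in
def colorSpan (d : G.Dart) : Set α := {x | Relation.ReflTransGen (G.ColorAdj d) d.fst x}

lemma ColorAdj.symm {u v : α} (h : G.ColorAdj d u v) : G.ColorAdj d v u :=
  ⟨h.1.symm, sameColor_symm_right.2 h.2⟩

lemma fst_mem_colorSpan (d : G.Dart) : d.fst ∈ G.colorSpan d := .refl

lemma snd_mem_colorSpan (d : G.Dart) : d.snd ∈ G.colorSpan d := .single ⟨d.adj, .refl d⟩

lemma exists_dart_of_mem_colorSpan {x : α} (hx : x ∈ G.colorSpan d) :
    ∃ e : G.Dart, e.fst = x ∧ G.SameColor d e := by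
  rcases hx.cases_tail with rfl | ⟨u, -, hux⟩
  · exact ⟨d, rfl, .refl d⟩
  · obtain ⟨hxu, hd⟩ := hux.symm
    exact ⟨⟨(x, u), hxu⟩, rfl, hd⟩

lemma adj_of_colorAdj_of_notMem_colorSpan {z u v : α} (hz : z ∉ G.colorSpan d)
    (hu : u ∈ G.colorSpan d) (huv : G.ColorAdj d u v) (hzu : G.Adj z u) : G.Adj z v := by
  by_contra hzv
  obtain ⟨huv, hd⟩ := huv
  have hforces : G.Forces ⟨(u, v), huv⟩ ⟨(u, z), hzu.symm⟩ := .inl ⟨rfl, fun h => hzv h.symm⟩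
  exact hz (hu.tail ⟨hzu.symm, hd.trans hforces.implied.sameColor⟩)

lemma adj_iff_of_notMem_colorSpan {z m : α} (hz : z ∉ G.colorSpan d) (hm : m ∈ G.colorSpan d) :
    G.Adj z m ↔ G.Adj z d.fst := by
  induction hm with
  | refl => rfl
  | tail hu huv ih =>
    exact Iff.trans ⟨adj_of_colorAdj_of_notMem_colorSpan hz (hu.tail huv) huv.symm,
      adj_of_colorAdj_of_notMem_colorSpan hz hu huv⟩ ih

section Orientation

variable {r : α → α → Prop} (hr : ∀ x y, G.Adj x y ↔ r x y ∨ r y x)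
include hr

lemma isModule_colorSpan (d : G.Dart) : IsModule r (G.colorSpan d) := by
  intro z hz
  by_cases hzd : G.Adj z d.fst
  · exact .inl fun m hm => (hr z m).1 ((adj_iff_of_notMem_colorSpan hz hm).2 hzd)
  · refine .inr fun m hm => not_or.1 ?_
    rw [← hr, adj_iff_of_notMem_colorSpan hz hm]
    exact hzd

lemma exists_dart_of_isIndecomposable (hprime : IsIndecomposable r) (d : G.Dart) (x : α) :
    ∃ e : G.Dart, e.fst = x ∧ G.SameColor d e := by
  refine exists_dart_of_mem_colorSpan ?_
  rcases hprime _ ⟨d.fst, fst_mem_colorSpan d⟩ (isModule_colorSpan hr d) with h | ⟨y, hy⟩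
  · exact h ▸ Set.mem_univ x
  · have hfst := fst_mem_colorSpan d
    have hsnd := snd_mem_colorSpan d
    rw [hy] at hfst hsnd
    exact absurd (hfst.trans hsnd.symm) d.fst_ne_snd

variable [IsStrictOrder α r]

lemma Dart.rel_symm_iff (d : G.Dart) : r d.symm.fst d.symm.snd ↔ ¬ r d.fst d.snd :=
  ⟨asymm, ((hr _ _).1 d.adj).resolve_left⟩

lemma Forces.rel_of_rel (hde : G.Forces d e) (h : r d.fst d.snd) : r e.fst e.snd := by
  refine ((hr _ _).1 e.adj).resolve_right fun he => ?_
  rcases hde with ⟨hfst, hsnd⟩ | ⟨hsnd, hfst⟩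
  · exact hsnd ((hr _ _).2 (.inr (_root_.trans he (hfst ▸ h))))
  · exact hfst ((hr _ _).2 (.inl (_root_.trans h (hsnd ▸ he))))

lemma Implied.rel_iff (hde : G.Implied d e) : r d.fst d.snd ↔ r e.fst e.snd := by
  induction hde with
  | refl => rfl
  | tail _ hf ih => exact ih.trans ⟨hf.rel_of_rel hr, hf.symm.rel_of_rel hr⟩

end Orientation

lemma SameColor.iff_iff {r s : α → α → Prop} [IsStrictOrder α r] [IsStrictOrder α s]
    (hr : ∀ x y, G.Adj x y ↔ r x y ∨ r y x) (hs : ∀ x y, G.Adj x y ↔ s x y ∨ s y x)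
    (hde : G.SameColor d e) :
    (s d.fst d.snd ↔ r d.fst d.snd) ↔ (s e.fst e.snd ↔ r e.fst e.snd) := by
  rcases hde with h | h
  · exact iff_congr (h.rel_iff hs) (h.rel_iff hr)
  · rw [h.rel_iff hs, h.rel_iff hr, Dart.rel_symm_iff hs, Dart.rel_symm_iff hr, not_iff_not]

theorem eq_or_eq_flip_of_sameColor {r s : α → α → Prop} [IsStrictOrder α r] [IsStrictOrder α s]
    (hr : ∀ x y, G.Adj x y ↔ r x y ∨ r y x) (hs : ∀ x y, G.Adj x y ↔ s x y ∨ s y x)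
    (hcolor : ∀ d e : G.Dart, G.SameColor d e) :
    (∀ x y, s x y ↔ r x y) ∨ (∀ x y, s x y ↔ r y x) := by
  have off_edge {x y : α} (hxy : ¬ G.Adj x y) : ¬ s x y ∧ ¬ r x y ∧ ¬ r y x :=
    ⟨fun h => hxy ((hs x y).2 (.inl h)), fun h => hxy ((hr x y).2 (.inl h)),
      fun h => hxy ((hr x y).2 (.inr h))⟩
  by_cases hagree : ∃ d : G.Dart, s d.fst d.snd ↔ r d.fst d.snd
  · obtain ⟨d, hd⟩ := hagree
    refine .inl fun x y => ?_
    by_cases hxy : G.Adj x y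
    · exact ((hcolor d ⟨(x, y), hxy⟩).iff_iff hr hs).1 hd
    · exact iff_of_false (off_edge hxy).1 (off_edge hxy).2.1
  · refine .inr fun x y => ?_
    by_cases hxy : G.Adj x y
    · rw [show r y x ↔ ¬ r x y from Dart.rel_symm_iff hr ⟨(x, y), hxy⟩]
      exact (not_iff_comm.1 (not_iff.1 fun h => hagree ⟨⟨(x, y), hxy⟩, h⟩)).symm
    · exact iff_of_false (off_edge hxy).1 (off_edge hxy).2.2

end SimpleGraph

theorem stmt_14_general {α : Type*} (ltP ltQ : α → α → Prop)
    (hP : IsStrictOrder α ltP) (hQ : IsStrictOrder α ltQ)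
    (hprime : IsIndecomposable ltP)
    (hcomp : ∀ x y, (ltP x y ∨ ltP y x) ↔ (ltQ x y ∨ ltQ y x)) :
    (∀ x y, ltQ x y ↔ ltP x y) ∨ (∀ x y, ltQ x y ↔ ltP y x) := by
  have hGP (x y : α) : (SimpleGraph.fromRel ltP).Adj x y ↔ ltP x y ∨ ltP y x := by
    rw [SimpleGraph.fromRel_adj, and_iff_right_iff_imp]
    rintro (h | h) rfl <;> exact irrefl _ h
  have hGQ (x y : α) : (SimpleGraph.fromRel ltP).Adj x y ↔ ltQ x y ∨ ltQ y x :=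
    (hGP x y).trans (hcomp x y)
  exact SimpleGraph.eq_or_eq_flip_of_sameColor hGP hGQ <|
    SimpleGraph.sameColor_of_forall_exists_dart <|
      SimpleGraph.exists_dart_of_isIndecomposable hGP hprime

theorem stmt_14 {α : Type*} [Fintype α] (ltP ltQ : α → α → Prop)
    (hP : IsStrictOrder α ltP) (hQ : IsStrictOrder α ltQ)
    (hprime : IsIndecomposable ltP)
    (hcomp : ∀ x y, (ltP x y ∨ ltP y x) ↔ (ltQ x y ∨ ltQ y x)) :
    (∀ x y, ltQ x y ↔ ltP x y) ∨ (∀ x y, ltQ x y ↔ ltP y x) :=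
  stmt_14_general ltP ltQ hP hQ hprime hcomp
end

section
/- Substitution preserves the CI (containment-of-intervals) property: if P is a poset with a containment representation by closed intervals of the real line, v ∈ P, and H is a poset with a containment representation by closed intervals, then the substitution P_{H→v} also admits a containment representation by closed intervals. -/
/-- The strict order relation of the substitution `P_{H→v}`: the element `v` of `P`
(on type `α`) is replaced by the poset `H` (on type `β`). -/
def subLT {α β : Type*} [PartialOrder α] [PartialOrder β] (v : α) :
    ({a : α // a ≠ v} ⊕ β) → ({a : α // a ≠ v} ⊕ β) → Prop
  | Sum.inl a, Sum.inl b => a.1 < b.1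
  | Sum.inl a, Sum.inr _ => a.1 < v
  | Sum.inr _, Sum.inl b => v < b.1
  | Sum.inr a, Sum.inr b => a < b

/-- A containment representation by nondegenerate closed real intervals. -/
def IsCIRel {γ : Type*} (lt : γ → γ → Prop) : Prop :=
  ∃ lo hi : γ → ℝ, (∀ x, lo x < hi x) ∧
    ∀ x y, lt x y ↔ Set.Icc (lo x) (hi x) ⊂ Set.Icc (lo y) (hi y)


/-!
Containment of intervals only depends on how left endpoints compare with left endpoints and
right endpoints with right endpoints. Blow up the endpoints `A`, `B` of `I_v` into segments,
put the new endpoints of `v` in their interiors and break the ties of other intervals at `A`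
or `B` lexicographically, pushing each to the end of the segment dictated by how it compares
with `I_v`; afterwards no other endpoint lies inside the two segments. Every element of `H`
then gets endpoints inside these segments, given by a representation of `H` squashed into
`(0, 1)`: against any other element of `P` all endpoint comparisons are those of `v`, and
among elements of `H` they are those of `H`.
-/

open Set

namespace Set

variable {L L' : Type*} [LinearOrder L] [LinearOrder L']

lemma Icc_ssubset_Icc_iff {a b c d : L} (hab : a ≤ b) (hcd : c ≤ d) :
    Icc a b ⊂ Icc c d ↔ (c ≤ a ∧ b ≤ d) ∧ (c < a ∨ b < d) := by
  rw [ssubset_iff_subset_not_subset, Icc_subset_Icc_iff hab, Icc_subset_Icc_iff hcd, not_and_or,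
    not_le, not_le]

lemma Icc_ssubset_Icc_congr {a b c d : L} {a' b' c' d' : L'} (hab : a ≤ b) (hcd : c ≤ d)
    (hab' : a' ≤ b') (hcd' : c' ≤ d') (hca : c ≤ a ↔ c' ≤ a') (hac : a ≤ c ↔ a' ≤ c')
    (hbd : b ≤ d ↔ b' ≤ d') (hdb : d ≤ b ↔ d' ≤ b') :
    Icc a b ⊂ Icc c d ↔ Icc a' b' ⊂ Icc c' d' := by
  simp only [Icc_ssubset_Icc_iff hab hcd, Icc_ssubset_Icc_iff hab' hcd', ← not_le, hca, hac,
    hbd, hdb]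

lemma le_iff_le_of_notMem_Ioo {u w w' c e : L} (hu : u ∉ Ioo c e) (hw : w ∈ Ioo c e)
    (hw' : w' ∈ Ioo c e) : u ≤ w ↔ u ≤ w' := by
  rcases not_and_or.1 hu with hu | hu <;> rw [not_lt] at hu
  · exact iff_of_true (hu.trans hw.1.le) (hu.trans hw'.1.le)
  · exact iff_of_false (not_le.2 (hw.2.trans_le hu)) (not_le.2 (hw'.2.trans_le hu))

lemma le_iff_le_of_notMem_Ioo' {u w w' c e : L} (hu : u ∉ Ioo c e) (hw : w ∈ Ioo c e)
    (hw' : w' ∈ Ioo c e) : w ≤ u ↔ w' ≤ u := by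
  rcases not_and_or.1 hu with hu | hu <;> rw [not_lt] at hu
  · exact iff_of_false (not_le.2 (hu.trans_lt hw.1)) (not_le.2 (hu.trans_lt hw'.1))
  · exact iff_of_true (hw.2.le.trans hu) (hw'.2.le.trans hu)

end Set

def IsContainmentRep {γ L : Type*} [LinearOrder L] (lt : γ → γ → Prop) (lo hi : γ → L) : Prop :=
  (∀ x, lo x < hi x) ∧ ∀ x y, lt x y ↔ Icc (lo x) (hi x) ⊂ Icc (lo y) (hi y)

namespace IsContainmentRep

variable {γ L L' M : Type*} [LinearOrder L] [LinearOrder L'] [LinearOrder M]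
  {lt : γ → γ → Prop} {lo hi : γ → L}

theorem of_le_iff (h : IsContainmentRep lt lo hi) {lo' hi' : γ → L'}
    (hlt : ∀ x, lo' x < hi' x) (hlo : ∀ x y, lo' x ≤ lo' y ↔ lo x ≤ lo y)
    (hhi : ∀ x y, hi' x ≤ hi' y ↔ hi x ≤ hi y) : IsContainmentRep lt lo' hi' :=
  ⟨hlt, fun x y => (h.2 x y).trans <| Icc_ssubset_Icc_congr (h.1 x).le (h.1 y).le
    (hlt x).le (hlt y).le (hlo y x).symm (hlo x y).symm (hhi x y).symm (hhi y x).symm⟩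

theorem comp_strictMono (h : IsContainmentRep lt lo hi) {f : L → L'} (hf : StrictMono f) :
    IsContainmentRep lt (f ∘ lo) (f ∘ hi) :=
  h.of_le_iff (fun x => hf (h.1 x)) (fun _ _ => hf.le_iff_le) (fun _ _ => hf.le_iff_le)

theorem lex (h : IsContainmentRep lt lo hi) {s t : γ → M}
    (hs : ∀ x y, lo x = lo y → hi x < hi y → s y ≤ s x)
    (ht : ∀ x y, hi x = hi y → lo y < lo x → t x ≤ t y)
    (hst : ∀ x y, lo x = lo y → hi x = hi y → (s x < s y ↔ t x < t y)) :
    IsContainmentRep lt (fun x => toLex (lo x, s x)) (fun x => toLex (hi x, t x)) := by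
  refine ⟨fun x => Prod.Lex.toLex_lt_toLex.2 (Or.inl (h.1 x)), fun x y => ?_⟩
  rw [h.2, Icc_ssubset_Icc_iff (h.1 x).le (h.1 y).le,
    Icc_ssubset_Icc_iff (Prod.Lex.toLex_lt_toLex.2 (Or.inl (h.1 x))).le
      (Prod.Lex.toLex_lt_toLex.2 (Or.inl (h.1 y))).le]
  simp only [Prod.Lex.toLex_le_toLex, Prod.Lex.toLex_lt_toLex]
  grind

end IsContainmentRep

/-- Replaces the points `A < B` of the line by the segments `[A, A + 1]` and `[B + 2, B + 3]`,
the position inside a segment being `q ∈ [0, 1]`. -/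
noncomputable def blowUp (A B p q : ℝ) : ℝ :=
  if p < A then p else if p = A then A + q
  else if p < B then p + 2 else if p = B then B + 2 + q else p + 4

section BlowUp

variable {A B : ℝ}

lemma blowUp_left (B q : ℝ) : blowUp A B A q = A + q := by
  simp [blowUp]

lemma blowUp_right (hAB : A < B) (q : ℝ) : blowUp A B B q = B + 2 + q := by
  simp [blowUp, hAB.not_gt, hAB.ne']

lemma blowUp_lt_blowUp (hAB : A < B) {p p' q q' : ℝ} (hq : q ∈ Icc 0 1) (hq' : q' ∈ Icc 0 1)
    (hp' : q' ≠ 0 → p' = A ∨ p' = B) (h : toLex (p, q) < toLex (p', q')) :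
    blowUp A B p q < blowUp A B p' q' := by
  rcases Prod.Lex.toLex_lt_toLex.1 h with h | ⟨rfl, h⟩
  · unfold blowUp
    split_ifs <;> linarith [hq.1, hq.2, hq'.1, hq'.2]
  · rcases hp' (hq.1.trans_lt h).ne' with rfl | rfl
    · rw [blowUp_left, blowUp_left]
      linarith
    · rw [blowUp_right hAB, blowUp_right hAB]
      linarith

lemma blowUp_le_blowUp_iff (hAB : A < B) {p p' q q' : ℝ} (hq : q ∈ Icc 0 1)
    (hq' : q' ∈ Icc 0 1) (hp : q ≠ 0 → p = A ∨ p = B) (hp' : q' ≠ 0 → p' = A ∨ p' = B) :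
    blowUp A B p q ≤ blowUp A B p' q' ↔ toLex (p, q) ≤ toLex (p', q') := by
  refine ⟨fun h => not_lt.1 fun h' => (blowUp_lt_blowUp hAB hq' hq hp h').not_ge h,
    fun h => ?_⟩
  rcases h.lt_or_eq with h | h
  · exact (blowUp_lt_blowUp hAB hq hq' hp' h).le
  · obtain ⟨rfl, rfl⟩ := Prod.ext_iff.1 (toLex.injective h)
    rfl

lemma blowUp_mem_Ioo_left_iff (hAB : A < B) {p q : ℝ} (hq : q ∈ Icc 0 1) :
    blowUp A B p q ∈ Ioo A (A + 1) ↔ p = A ∧ q ∈ Ioo 0 1 := by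
  unfold blowUp
  split_ifs <;> grind

lemma blowUp_mem_Ioo_right_iff (hAB : A < B) {p q : ℝ} (hq : q ∈ Icc 0 1) :
    blowUp A B p q ∈ Ioo (B + 2) (B + 3) ↔ p = B ∧ q ∈ Ioo 0 1 := by
  unfold blowUp
  split_ifs <;> grind

end BlowUp

theorem IsContainmentRep.exists_isolated {α : Type*} {lt : α → α → Prop} {lo hi : α → ℝ}
    (h : IsContainmentRep lt lo hi) (v : α) :
    ∃ lo₂ hi₂ : α → ℝ, IsContainmentRep lt lo₂ hi₂ ∧ ∃ c d : ℝ, c + 1 ≤ d ∧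
      (∀ x, lo₂ x ∈ Ioo c (c + 1) ↔ x = v) ∧ (∀ x, hi₂ x ∈ Ioo d (d + 1) ↔ x = v) := by
  classical
  set A := lo v
  set B := hi v
  have hAB : A < B := h.1 v
  -- `v` moves into the interior of both new segments; another interval with an endpoint at `A`
  -- or `B` moves to the end of the segment on the side where `I_v` lies relative to it.
  let s : α → ℝ := fun x => if x = v then 1 / 2 else if lo x = A ∧ hi x < B then 1 else 0
  let t : α → ℝ := fun x => if x = v then 1 / 2 else if hi x = B ∧ lo x < A then 1 else 0
  have hs : ∀ x, s x ∈ Icc 0 1 := fun x => by simp only [s]; split_ifs <;> norm_num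
  have ht : ∀ x, t x ∈ Icc 0 1 := fun x => by simp only [t]; split_ifs <;> norm_num
  have hs_supp : ∀ x, s x ≠ 0 → lo x = A ∨ lo x = B := fun x => by
    simp only [s]; split_ifs <;> grind
  have ht_supp : ∀ x, t x ≠ 0 → hi x = A ∨ hi x = B := fun x => by
    simp only [t]; split_ifs <;> grind
  have hlex := h.lex (s := s) (t := t) (fun x y => by simp only [s]; split_ifs <;> grind)
    (fun x y => by simp only [t]; split_ifs <;> grind)
    (fun x y => by simp only [s, t]; split_ifs <;> grind)
  refine ⟨fun x => blowUp A B (lo x) (s x), fun x => blowUp A B (hi x) (t x),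
    hlex.of_le_iff (fun x => blowUp_lt_blowUp hAB (hs x) (ht x) (ht_supp x) (hlex.1 x))
      (fun x y => blowUp_le_blowUp_iff hAB (hs x) (hs y) (hs_supp x) (hs_supp y))
      (fun x y => blowUp_le_blowUp_iff hAB (ht x) (ht y) (ht_supp x) (ht_supp y)),
    A, B + 2, by linarith, fun x => ?_, fun x => ?_⟩
  · rw [blowUp_mem_Ioo_left_iff hAB (hs x)]
    simp only [s]; split_ifs <;> grind
  · rw [show B + 2 + 1 = B + 3 by ring, blowUp_mem_Ioo_right_iff hAB (ht x)]
    simp only [t]; split_ifs <;> grind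

theorem isCIRel_subLT_of_isolated {α β : Type*} [PartialOrder α] [PartialOrder β] {v : α}
    {lo hi : α → ℝ} (hP : IsContainmentRep (· < ·) lo hi) {c d : ℝ} (hcd : c + 1 ≤ d)
    (hlo : ∀ x, lo x ∈ Ioo c (c + 1) ↔ x = v) (hhi : ∀ x, hi x ∈ Ioo d (d + 1) ↔ x = v)
    {lo' hi' : β → ℝ} (hH : IsContainmentRep (· < ·) lo' hi') (hlo' : ∀ b, lo' b ∈ Ioo 0 1)
    (hhi' : ∀ b, hi' b ∈ Ioo 0 1) :
    IsCIRel (subLT (β := β) v) := by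
  have hloH : ∀ b, c + lo' b ∈ Ioo c (c + 1) := fun b => by
    constructor <;> linarith [(hlo' b).1, (hlo' b).2]
  have hhiH : ∀ b, d + hi' b ∈ Ioo d (d + 1) := fun b => by
    constructor <;> linarith [(hhi' b).1, (hhi' b).2]
  have hltH : ∀ b, c + lo' b < d + hi' b := fun b => (hloH b).2.trans_le (hcd.trans (hhiH b).1.le)
  have hlo_ne : ∀ a : {a : α // a ≠ v}, lo a ∉ Ioo c (c + 1) := fun a => (hlo a).not.2 a.2
  have hhi_ne : ∀ a : {a : α // a ≠ v}, hi a ∉ Ioo d (d + 1) := fun a => (hhi a).not.2 a.2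
  have hlo_v := (hlo v).2 rfl
  have hhi_v := (hhi v).2 rfl
  refine ⟨Sum.elim (fun a => lo a) (fun b => c + lo' b),
    Sum.elim (fun a => hi a) (fun b => d + hi' b), ?_, ?_⟩
  · rintro (a | b)
    exacts [hP.1 a, hltH b]
  rintro (a | b) (a' | b')
  · exact hP.2 a a'
  · refine (hP.2 a v).trans <| Icc_ssubset_Icc_congr (hP.1 a).le (hP.1 v).le (hP.1 a).le
      (hltH b').le
      (le_iff_le_of_notMem_Ioo' (hlo_ne a) hlo_v (hloH b'))
      (le_iff_le_of_notMem_Ioo (hlo_ne a) hlo_v (hloH b'))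
      (le_iff_le_of_notMem_Ioo (hhi_ne a) hhi_v (hhiH b'))
      (le_iff_le_of_notMem_Ioo' (hhi_ne a) hhi_v (hhiH b'))
  · refine (hP.2 v a').trans <| Icc_ssubset_Icc_congr (hP.1 v).le (hP.1 a').le (hltH b).le
      (hP.1 a').le
      (le_iff_le_of_notMem_Ioo (hlo_ne a') hlo_v (hloH b))
      (le_iff_le_of_notMem_Ioo' (hlo_ne a') hlo_v (hloH b))
      (le_iff_le_of_notMem_Ioo' (hhi_ne a') hhi_v (hhiH b))
      (le_iff_le_of_notMem_Ioo (hhi_ne a') hhi_v (hhiH b))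
  · refine (hH.2 b b').trans <| Icc_ssubset_Icc_congr (hH.1 b).le (hH.1 b').le (hltH b).le
      (hltH b').le ?_ ?_ ?_ ?_ <;> exact (add_le_add_iff_left _).symm

theorem stmt_16 {α β : Type*} [PartialOrder α] [PartialOrder β] (v : α)
    (hP : IsCIRel (· < · : α → α → Prop))
    (hH : IsCIRel (· < · : β → β → Prop)) :
    IsCIRel (subLT (β := β) v) := by
  obtain ⟨lo, hi, hP⟩ := hP
  obtain ⟨lo', hi', hH⟩ := hH
  obtain ⟨lo₂, hi₂, hP₂, c, d, hcd, hlo, hhi⟩ := IsContainmentRep.exists_isolated hP v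
  exact isCIRel_subLT_of_isolated hP₂ hcd hlo hhi
    (IsContainmentRep.comp_strictMono hH Real.sigmoid_strictMono)
    (fun _ => ⟨Real.sigmoid_pos _, Real.sigmoid_lt_one _⟩)
    (fun _ => ⟨Real.sigmoid_pos _, Real.sigmoid_lt_one _⟩)
end

section
/- Every finite CI poset admits a CI representation in which the intersection of all intervals is a nondegenerate interval, no interval is a single point, and no two intervals share an endpoint. -/
/-!
Sending `x` to `(lo x, hi x) ∈ ℝᵒᵈ × ℝ` turns strict containment of closed intervals into the
strict product order. Writing `(u, v)` for that pair, ties are broken by ranking the elements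
along the lexicographic keys `(u, v, e)` and `(v, u, toDual e)` for an enumeration `e`: a strict
product comparison is decided before the tie-breaker is reached, and since the tie-breaker runs
in opposite directions in the two keys, elements carrying equal intervals stay incomparable.
The two rank functions `U, V : α → ℕ` are injective, and the intervals `[-U x - 1, V x + 1]`
all contain `[-1, 1]` and have pairwise distinct endpoints.
-/

/-- A containment representation by closed real intervals (possibly degenerate). -/
def HasCIRep {γ : Type*} (lt : γ → γ → Prop) : Prop :=
  ∃ lo hi : γ → ℝ, (∀ x, lo x ≤ hi x) ∧
    ∀ x y, lt x y ↔ Set.Icc (lo x) (hi x) ⊂ Set.Icc (lo y) (hi y)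

open Set Finset Function OrderDual

theorem Set.Icc_ssubset_Icc_iff_toDual_lt {β : Type*} [Preorder β] {a b c d : β}
    (hab : a ≤ b) (hcd : c ≤ d) : Icc a b ⊂ Icc c d ↔ (toDual a, b) < (toDual c, d) := by
  rw [ssubset_iff_subset_not_subset, Icc_subset_Icc_iff hab, Icc_subset_Icc_iff hcd,
    lt_iff_le_not_ge]
  rfl

theorem Prod.mk_lt_mk_iff_of_injective {α β γ : Type*} [PartialOrder β] [PartialOrder γ]
    {f : α → β} {g : α → γ} (hf : Injective f) (hg : Injective g) {x y : α} :
    (f x, g x) < (f y, g y) ↔ f x < f y ∧ g x < g y := by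
  refine ⟨fun h => ?_, fun h => Prod.mk_lt_mk_of_lt_of_le h.1 h.2.le⟩
  have hxy : x ≠ y := by rintro rfl; exact h.ne rfl
  exact ⟨h.le.1.lt_of_ne (hf.ne hxy), h.le.2.lt_of_ne (hg.ne hxy)⟩

theorem Prod.lt_iff_toLex_lt_and_toLex_swap_lt {β γ δ : Type*} [PartialOrder β] [PartialOrder γ]
    [Preorder δ] {a b : β × γ} {i j : δ} :
    a < b ↔ toLex (a.1, toLex (a.2, i)) < toLex (b.1, toLex (b.2, j)) ∧
      toLex (a.2, toLex (a.1, toDual i)) < toLex (b.2, toLex (b.1, toDual j)) := by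
  simp only [Prod.Lex.toLex_lt_toLex', toDual_lt_toDual]
  constructor
  · intro h
    obtain ⟨h₁, h₂⟩ := Prod.le_def.1 h.le
    exact ⟨⟨h₁, fun e => ⟨h₂, fun e' => absurd (Prod.ext e e') h.ne⟩⟩,
      ⟨h₂, fun e' => ⟨h₁, fun e => absurd (Prod.ext e e') h.ne⟩⟩⟩
  · rintro ⟨⟨h₁, hij⟩, ⟨h₂, hji⟩⟩
    refine lt_of_le_of_ne ⟨h₁, h₂⟩ fun hab => ?_
    subst hab
    exact lt_asymm (hij rfl |>.2 rfl) (hji rfl |>.2 rfl)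

section rankBy

variable {α β : Type*} [Fintype α] [LinearOrder β]

def rankBy (k : α → β) (x : α) : ℕ :=
  #{z | k z < k x}

theorem rankBy_lt_rankBy_iff {k : α → β} {x y : α} : rankBy k x < rankBy k y ↔ k x < k y := by
  constructor
  · intro h
    by_contra! hyx
    exact h.not_ge (card_le_card fun z hz => by simp at hz ⊢; exact hz.trans_le hyx)
  · intro h
    refine card_lt_card ⟨fun z hz => by simp at hz ⊢; exact hz.trans h, fun hsub => ?_⟩
    have := hsub (by simpa using h)
    simp at this

theorem rankBy_injective {k : α → β} (hk : Injective k) : Injective (rankBy k) := by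
  intro x y h
  refine hk (le_antisymm ?_ ?_) <;> refine not_lt.1 fun h' => ?_
  · exact (rankBy_lt_rankBy_iff.2 h').ne' h
  · exact (rankBy_lt_rankBy_iff.2 h').ne h

end rankBy

theorem exists_injective_nat_pair_lt_iff {α β γ : Type*} [Fintype α] [LinearOrder β]
    [LinearOrder γ] (p : α → β × γ) :
    ∃ U V : α → ℕ, Injective U ∧ Injective V ∧ ∀ x y, p x < p y ↔ U x < U y ∧ V x < V y := by
  let e := Fintype.equivFin α
  let kU x := toLex ((p x).1, toLex ((p x).2, e x))
  let kV x := toLex ((p x).2, toLex ((p x).1, toDual (e x)))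
  have hkU : Injective kU := fun x y h => by
    simp only [kU, toLex_inj, Prod.mk.injEq, e.apply_eq_iff_eq] at h
    exact h.2.2
  have hkV : Injective kV := fun x y h => by
    simp only [kV, toLex_inj, Prod.mk.injEq, toDual_inj, e.apply_eq_iff_eq] at h
    exact h.2.2
  refine ⟨rankBy kU, rankBy kV, rankBy_injective hkU, rankBy_injective hkV, fun x y => ?_⟩
  rw [rankBy_lt_rankBy_iff, rankBy_lt_rankBy_iff]
  exact Prod.lt_iff_toLex_lt_and_toLex_swap_lt

theorem stmt_17 {α : Type*} [PartialOrder α] [Fintype α]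
    (hCI : HasCIRep (· < · : α → α → Prop)) :
    ∃ lo hi : α → ℝ,
      (∀ x, lo x < hi x) ∧
      (∀ x y, x < y ↔ Set.Icc (lo x) (hi x) ⊂ Set.Icc (lo y) (hi y)) ∧
      (∃ c d : ℝ, c < d ∧ ∀ x, Set.Icc c d ⊆ Set.Icc (lo x) (hi x)) ∧
      (∀ x y, x ≠ y →
        lo x ≠ lo y ∧ lo x ≠ hi y ∧ hi x ≠ lo y ∧ hi x ≠ hi y) := by
  obtain ⟨lo, hi, hle, hrep⟩ := hCI
  have hprod x y : x < y ↔ (toDual (lo x), hi x) < (toDual (lo y), hi y) :=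
    (hrep x y).trans (Icc_ssubset_Icc_iff_toDual_lt (hle x) (hle y))
  obtain ⟨U, V, hU, hV, hUV⟩ := exists_injective_nat_pair_lt_iff fun x => (toDual (lo x), hi x)
  set lo' : α → ℝ := fun x => -U x - 1
  set hi' : α → ℝ := fun x => V x + 1
  have hlo' x : lo' x ≤ -1 := by simp [lo']
  have hhi' x : 1 ≤ hi' x := by simp [hi']
  have hlo'_inj : Injective lo' := fun x y h => hU (by simpa [lo'] using h)
  have hhi'_inj : Injective hi' := fun x y h => hV (by simpa [hi'] using h)
  have hlt x : lo' x < hi' x := by linarith [hlo' x, hhi' x]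
  refine ⟨lo', hi', hlt, fun x y => ?_, ⟨-1, 1, by norm_num, fun x =>
    Icc_subset_Icc (hlo' x) (hhi' x)⟩, fun x y hxy => ⟨hlo'_inj.ne hxy, ?_, ?_, hhi'_inj.ne hxy⟩⟩
  · rw [hprod, hUV, Icc_ssubset_Icc_iff_toDual_lt (hlt x).le (hlt y).le,
      Prod.mk_lt_mk_iff_of_injective (f := fun x => toDual (lo' x))
        (toDual.injective.comp hlo'_inj) hhi'_inj]
    simp only [toDual_lt_toDual, lo', hi', sub_lt_sub_iff_right, neg_lt_neg_iff,
      add_lt_add_iff_right, Nat.cast_lt]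
  · linarith [hlo' x, hhi' y]
  · linarith [hhi' x, hlo' y]
end

section
/- Let P = (X, ≤) be a poset with a CPT representation and let z ∈ X. Then the principal down-set D[z] = {x : x ≤ z}, with the induced order, is a CI poset (has a containment representation by subpaths of a path). -/
/-- `S` is the vertex set of a path in the graph `T`. -/
def IsVertexPath {V : Type*} (T : SimpleGraph V) (S : Set V) : Prop :=
  ∃ (u v : V) (p : T.Walk u v), p.IsPath ∧ S = {x | x ∈ p.support}

/-! `W z` is the vertex set of a path `p` in the tree. For `x ≤ z`, `W x` is the vertex set of a
path whose ends lie on `p`; paths in a tree are unique, so it is the segment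
`p.getVert '' [i, j]`. As `p` visits no vertex twice, containment of segments is containment of
their index intervals `[i, j]`. -/

open Set

namespace SimpleGraph.Walk

variable {V : Type*} {G : SimpleGraph V}

lemma support_drop_take_eq_getVert_image {u v : V} (p : G.Walk u v) {i j : ℕ} (hij : i ≤ j)
    (hj : j ≤ p.length) :
    {w | w ∈ ((p.drop i).take (j - i)).support} = p.getVert '' Icc i j := by
  ext w
  simp only [mem_ofPred_eq, mem_support_iff_exists_getVert, take_getVert, drop_getVert,
    take_length, drop_length, mem_image, mem_Icc]
  constructor
  · rintro ⟨n, rfl, hn⟩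
    exact ⟨i + min (j - i) n, ⟨by omega, by omega⟩, rfl⟩
  · rintro ⟨k, ⟨hik, hkj⟩, rfl⟩
    exact ⟨k - i, by congr 1; omega, by omega⟩

end SimpleGraph.Walk

namespace SimpleGraph.IsAcyclic

open Walk

variable {V : Type*} {G : SimpleGraph V}

lemma support_eq_getVert_image_of_le (hG : G.IsAcyclic) {u v : V} {p : G.Walk u v}
    (hp : p.IsPath) {i j : ℕ} (hij : i ≤ j) (hj : j ≤ p.length)
    (q : G.Walk (p.getVert i) (p.getVert j)) (hq : q.IsPath) :
    {w | w ∈ q.support} = p.getVert '' Icc i j := by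
  have hend : (p.drop i).getVert (j - i) = p.getVert j := by
    rw [drop_getVert]; congr 1; omega
  let segment := ((p.drop i).take (j - i)).copy rfl hend
  have hsegment : segment.IsPath := by
    simpa [segment] using (hp.drop i).take (j - i)
  have hq_eq : q = segment :=
    congrArg Subtype.val ((hG.subsingleton_path _ _).elim ⟨q, hq⟩ ⟨segment, hsegment⟩)
  rw [hq_eq, support_copy, support_drop_take_eq_getVert_image p hij hj]

lemma exists_support_eq_getVert_image (hG : G.IsAcyclic) {u v a b : V} {p : G.Walk u v}
    (hp : p.IsPath) (ha : a ∈ p.support) (hb : b ∈ p.support) (q : G.Walk a b)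
    (hq : q.IsPath) :
    ∃ i j, i ≤ j ∧ j ≤ p.length ∧ {w | w ∈ q.support} = p.getVert '' Icc i j := by
  obtain ⟨i, rfl, hi⟩ := mem_support_iff_exists_getVert.1 ha
  obtain ⟨j, rfl, hj⟩ := mem_support_iff_exists_getVert.1 hb
  rcases le_total i j with hij | hji
  · exact ⟨i, j, hij, hj, hG.support_eq_getVert_image_of_le hp hij hj q hq⟩
  · refine ⟨j, i, hji, hi, ?_⟩
    rw [← hG.support_eq_getVert_image_of_le hp hji hi q.reverse hq.reverse]
    simp

end SimpleGraph.IsAcyclic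

lemma natCast_Icc_subset_Icc_iff {a b c d : ℕ} (hab : a ≤ b) :
    Icc (a : ℝ) b ⊆ Icc (c : ℝ) d ↔ Icc a b ⊆ Icc c d := by
  rw [Icc_subset_Icc_iff hab, Icc_subset_Icc_iff (by exact_mod_cast hab)]
  norm_cast

lemma hasCIRep_of_natIntervals {γ : Type*} {lt : γ → γ → Prop} (lo hi : γ → ℕ)
    (hle : ∀ x, lo x ≤ hi x) (hlt : ∀ x y, lt x y ↔ Icc (lo x) (hi x) ⊂ Icc (lo y) (hi y)) :
    HasCIRep lt := by
  refine ⟨fun x => lo x, fun x => hi x, fun x => Nat.cast_le.2 (hle x), fun x y => ?_⟩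
  rw [hlt, ssubset_iff_subset_not_subset, ssubset_iff_subset_not_subset,
    natCast_Icc_subset_Icc_iff (hle x), natCast_Icc_subset_Icc_iff (hle y)]

theorem stmt_18 {α : Type*} [PartialOrder α] {V : Type*}
    (T : SimpleGraph V) (hT : T.IsTree) (W : α → Set V)
    (hpath : ∀ x, IsVertexPath T (W x))
    (hrep : ∀ x y, x < y ↔ W x ⊂ W y) (z : α) :
    HasCIRep (fun a b : {x : α // x ≤ z} => a.1 < b.1) := by
  obtain ⟨u, v, p, hp, hWz⟩ := hpath z
  have hinterval : ∀ x : {x : α // x ≤ z},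
      ∃ i j, i ≤ j ∧ j ≤ p.length ∧ W x = p.getVert '' Icc i j := by
    rintro ⟨x, hxz⟩
    obtain ⟨a, b, q, hq, hWx⟩ := hpath x
    have hsub : W x ⊆ W z := by
      rcases hxz.lt_or_eq with hlt | rfl
      exacts [((hrep x z).1 hlt).subset, subset_rfl]
    rw [hWz] at hsub
    rw [hWx]
    exact hT.isAcyclic.exists_support_eq_getVert_image hp (hsub (hWx ▸ q.start_mem_support))
      (hsub (hWx ▸ q.end_mem_support)) q hq
  choose lo hi hle hhi hW using hinterval
  refine hasCIRep_of_natIntervals lo hi hle fun x y => ?_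
  rw [hrep, hW, hW]
  exact hp.getVert_injOn.image_ssubset_image_iff (fun k hk => (hk.2.trans (hhi x) : _))
    (fun k hk => (hk.2.trans (hhi y) : _))
end

section
/- If P is a finite poset such that both P and its dual P^d admit CPT representations (P is dually-CPT), then for every element z the induced subposets on the closed down-set D[z] and on the closed up-set U[z] are both CI posets. -/
/-- A containment representation by paths in a tree. -/
def HasCPTRep {α : Type*} (lt : α → α → Prop) : Prop :=
  ∃ (V : Type) (T : SimpleGraph V), T.IsTree ∧
    ∃ W : α → Set V, (∀ x, IsVertexPath T (W x)) ∧ ∀ x y, lt x y ↔ W x ⊂ W y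

/-! In a tree the path between two vertices lies on every walk joining them, so a path all of
whose vertices lie on the path `W z` is a contiguous segment of it. Numbering the vertices of
`W z` along the path turns the paths `W x`, `x ≤ z`, into integer intervals with the same
containments. The up-set of `z` is its down-set in the dual poset, and for finitely many
intervals `[l, h] ↦ [-l, C - h]`, with `C` bounding all lengths, reverses containment. -/

namespace SimpleGraph

variable {V : Type*} {G : SimpleGraph V}

theorem IsAcyclic.support_subset_of_mem_support (hG : G.IsAcyclic) {x y a b : V}
    {r : G.Walk x y} (hr : r.IsPath) (w : G.Walk a b) (hx : x ∈ w.support)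
    (hy : y ∈ w.support) : r.support ⊆ w.support := by
  classical
  let w' : G.Walk x y := (w.takeUntil x hx).reverse.append (w.takeUntil y hy)
  have hrw : r = w'.bypass :=
    congrArg Subtype.val ((hG.subsingleton_path x y).elim ⟨r, hr⟩ ⟨_, w'.bypass_isPath⟩)
  intro v hv
  rw [hrw] at hv
  rcases (Walk.mem_support_append_iff _ _).1 (w'.support_bypass_subset_support hv) with h | h
  · rw [Walk.support_reverse, List.mem_reverse] at h
    exact w.support_takeUntil_subset_support hx h
  · exact w.support_takeUntil_subset_support hy h

theorem Walk.setOf_mem_support_take_drop {u v : V} (p : G.Walk u v) {i k : ℕ} (hik : i ≤ k)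
    (hk : k ≤ p.length) :
    {x | x ∈ ((p.drop i).take (k - i)).support} = p.getVert '' Set.Icc i k := by
  ext x
  simp only [Set.mem_ofPred_eq, Walk.mem_support_iff_exists_getVert, Walk.take_getVert,
    Walk.drop_getVert, Walk.take_length, Walk.drop_length, Set.mem_image, Set.mem_Icc]
  constructor
  · rintro ⟨m, rfl, hm⟩
    exact ⟨i + min (k - i) m, ⟨by omega, by omega⟩, rfl⟩
  · rintro ⟨j, ⟨hij, hjk⟩, rfl⟩
    exact ⟨j - i, by congr 1; omega, by omega⟩

theorem IsAcyclic.exists_setOf_mem_support_eq_image_Icc (hG : G.IsAcyclic) {u v a b : V}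
    {p : G.Walk u v} (hp : p.IsPath) {q : G.Walk a b} (hq : q.IsPath)
    (hqp : q.support ⊆ p.support) :
    ∃ i k, i ≤ k ∧ k ≤ p.length ∧ {x | x ∈ q.support} = p.getVert '' Set.Icc i k := by
  obtain ⟨i, rfl, hi⟩ := Walk.mem_support_iff_exists_getVert.1 (hqp q.start_mem_support)
  obtain ⟨k, rfl, hk⟩ := Walk.mem_support_iff_exists_getVert.1 (hqp q.end_mem_support)
  wlog hik : i ≤ k generalizing q i k
  · simpa only [Walk.support_reverse, List.mem_reverse] using
      this k hk i hi hq.reverse (by simpa using hqp) (by omega)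
  let r := (p.drop i).take (k - i)
  have hr : {x | x ∈ r.support} = p.getVert '' Set.Icc i k :=
    p.setOf_mem_support_take_drop hik hk
  have hrq : r.support ⊆ q.support := by
    refine hG.support_subset_of_mem_support ((hp.drop i).take _) q q.start_mem_support ?_
    rw [Walk.drop_getVert, Nat.add_sub_cancel' hik]
    exact q.end_mem_support
  have hqr : q.support ⊆ r.support := by
    have hmem : ∀ j ∈ Set.Icc i k, p.getVert j ∈ r.support := fun j hj =>
      (Set.ext_iff.1 hr _).2 ⟨j, hj, rfl⟩
    exact hG.support_subset_of_mem_support hq r (hmem i ⟨le_rfl, hik⟩) (hmem k ⟨hik, le_rfl⟩)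
  refine ⟨i, k, hik, hk, ?_⟩
  rw [← hr]
  exact Set.ext fun _ => ⟨(hqr ·), (hrq ·)⟩

end SimpleGraph

theorem Set.Icc_ssubset_Icc_iff_s19 {β : Type*} [LinearOrder β] {a₁ b₁ a₂ b₂ : β}
    (h₁ : a₁ ≤ b₁) (h₂ : a₂ ≤ b₂) :
    Set.Icc a₁ b₁ ⊂ Set.Icc a₂ b₂ ↔ (a₂ ≤ a₁ ∧ b₁ ≤ b₂) ∧ ¬(a₁ ≤ a₂ ∧ b₂ ≤ b₁) := by
  rw [Set.ssubset_def, Set.Icc_subset_Icc_iff h₁, Set.Icc_subset_Icc_iff h₂]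

theorem Set.Icc_natCast_ssubset_Icc_natCast_iff {a₁ b₁ a₂ b₂ : ℕ} (h₁ : a₁ ≤ b₁)
    (h₂ : a₂ ≤ b₂) :
    Set.Icc (a₁ : ℝ) b₁ ⊂ Set.Icc (a₂ : ℝ) b₂ ↔ Set.Icc a₁ b₁ ⊂ Set.Icc a₂ b₂ := by
  rw [Set.Icc_ssubset_Icc_iff_s19 h₁ h₂, Set.Icc_ssubset_Icc_iff_s19 (by exact_mod_cast h₁)
    (by exact_mod_cast h₂)]
  simp only [Nat.cast_le]

theorem HasCIRep.flip {γ : Type*} [Finite γ] {lt : γ → γ → Prop} (h : HasCIRep lt) :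
    HasCIRep (fun a b => lt b a) := by
  obtain ⟨lo, hi, hle, hlt⟩ := h
  obtain ⟨C, hC⟩ := (Set.finite_range fun x => hi x - lo x).bddAbove
  have hlen : ∀ x, hi x - lo x ≤ C := fun x => hC ⟨x, rfl⟩
  refine ⟨fun x => -lo x, fun x => C - hi x, fun x => by linarith [hlen x], fun x y => ?_⟩
  dsimp only
  rw [hlt, Set.Icc_ssubset_Icc_iff_s19 (hle y) (hle x),
    Set.Icc_ssubset_Icc_iff_s19 (by linarith [hlen x]) (by linarith [hlen y])]
  simp only [neg_le_neg_iff, sub_le_sub_iff_left, and_comm]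

theorem hasCIRep_of_subset_vertexPath {γ V : Type*} {T : SimpleGraph V} (hT : T.IsAcyclic)
    {lt : γ → γ → Prop} {W : γ → Set V} (hW : ∀ x, IsVertexPath T (W x))
    (hlt : ∀ x y, lt x y ↔ W x ⊂ W y) {P : Set V} (hP : IsVertexPath T P)
    (hWP : ∀ x, W x ⊆ P) : HasCIRep lt := by
  obtain ⟨u, v, p, hp, rfl⟩ := hP
  have hseg : ∀ x, ∃ i k, i ≤ k ∧ k ≤ p.length ∧ W x = p.getVert '' Set.Icc i k := by
    intro x
    obtain ⟨a, b, q, hq, hWx⟩ := hW x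
    have hqp : q.support ⊆ p.support := fun y hy => hWP x (hWx ▸ hy)
    rw [hWx]
    exact hT.exists_setOf_mem_support_eq_image_Icc hp hq hqp
  choose lo hi hle hhi hWeq using hseg
  have hIcc : ∀ x, Set.Icc (lo x) (hi x) ⊆ {i | i ≤ p.length} :=
    fun x i hi' => hi'.2.trans (hhi x)
  refine ⟨fun x => lo x, fun x => hi x, fun x => Nat.cast_le.2 (hle x), fun x y => ?_⟩
  rw [hlt, hWeq x, hWeq y, hp.getVert_injOn.image_ssubset_image_iff (hIcc x) (hIcc y),
    Set.Icc_natCast_ssubset_Icc_natCast_iff (hle x) (hle y)]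

theorem HasCPTRep.hasCIRep_le {β : Type*} [PartialOrder β]
    (h : HasCPTRep (· < · : β → β → Prop)) (z : β) :
    HasCIRep (fun a b : {x : β // x ≤ z} => a.1 < b.1) := by
  obtain ⟨V, T, hT, W, hW, hlt⟩ := h
  refine hasCIRep_of_subset_vertexPath hT.isAcyclic (fun x => hW x.1) (fun x y => hlt x y)
    (hW z) fun x => ?_
  rcases x.2.lt_or_eq with hxz | hxz
  · exact ((hlt _ _).1 hxz).subset
  · rw [hxz]

theorem stmt_19 {α : Type*} [PartialOrder α] [Fintype α]
    (hP : HasCPTRep (· < · : α → α → Prop))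
    (hPd : HasCPTRep (fun a b : α => b < a)) (z : α) :
    HasCIRep (fun a b : {x : α // x ≤ z} => a.1 < b.1) ∧
      HasCIRep (fun a b : {x : α // z ≤ x} => a.1 < b.1) :=
  ⟨hP.hasCIRep_le z, (HasCPTRep.hasCIRep_le (β := αᵒᵈ) hPd (OrderDual.toDual z)).flip⟩
end
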